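/- There exists a norm N on the real Hilbert space ℓ² of square-summable real sequences such that: N is equivalent to the standard ℓ² norm; N is a lattice norm for the coordinatewise order (that is, if |x(n)| ≤ |y(n)| for all n then N(x) ≤ N(y)), so that (ℓ², N) with the coordinatewise order is a Banach lattice; and (ℓ², N) is not weakly monotone. Consequently there is a Banach lattice isomorphic to ℓ² that does not have the Bishop–Phelps–Bollobás property for positive functionals. -/

import Mathlib

open scoped ENNReal

/-- The *Bishop–Phelps–Bollobás property for positive functionals* of a Banach lattice. -/
def BPBppPositive (X : Type*) [NormedAddCommGroup X] [Lattice X] [HasSolidNorm X] [IsOrderedAddMonoid X] [NormedSpace ℝ X] : Prop :=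
  ∀ ε : ℝ, 0 < ε → ε < 1 → ∃ η : ℝ, 0 < η ∧ η < ε ∧
    ∀ f : X →L[ℝ] ℝ, (∀ z : X, 0 ≤ z → 0 ≤ f z) → ‖f‖ = 1 →
      ∀ x₀ : X, ‖x₀‖ = 1 → 1 - η < f x₀ →
        ∃ (y : X) (g : X →L[ℝ] ℝ), ‖y‖ = 1 ∧
          (∀ z : X, 0 ≤ z → 0 ≤ g z) ∧ ‖g‖ = 1 ∧
          g y = 1 ∧ ‖y - x₀‖ < ε ∧ ‖g - f‖ < ε

/-- A Banach lattice is *weakly monotone* (WM) if for every `0 < ε < 1` there is `0 < δ < ε`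
such that whenever `‖x‖ ≤ 1` and `‖x⁺‖ > 1 - δ`, there exists `y` with `‖y‖ = 1`,
`‖y⁺‖ = 1` and `‖y - x‖ < ε`. -/
def WeaklyMonotoneLattice (X : Type*) [NormedAddCommGroup X] [Lattice X] [HasSolidNorm X] [IsOrderedAddMonoid X] : Prop :=
  ∀ ε : ℝ, 0 < ε → ε < 1 → ∃ δ : ℝ, 0 < δ ∧ δ < ε ∧
    ∀ x : X, ‖x‖ ≤ 1 → 1 - δ < ‖x ⊔ 0‖ →
      ∃ y : X, ‖y‖ = 1 ∧ ‖y ⊔ 0‖ = 1 ∧ ‖y - x‖ < ε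

/-- A Banach lattice which, as a normed space, is isomorphic to `ℓ²` (i.e. `ℓ²` with an
equivalent lattice norm for the coordinatewise order), but which is not weakly monotone and
does not have the Bishop–Phelps–Bollobás property for positive functionals. -/
structure Ell2Counterexample where
  /-- the underlying space -/
  X : Type
  /-- the lattice-norm structure (the norm is a lattice norm for the order) -/
  [inst1 : NormedAddCommGroup X]
  [inst1_lattice : Lattice X]
  [inst1_solid : HasSolidNorm X]
  [inst1_ordered : IsOrderedAddMonoid X]
  /-- the real normed-space structure -/
  [inst2 : NormedSpace ℝ X]
  [inst3 : PosSMulStrictMono ℝ X]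
  /-- `X` is `ℓ²` with an equivalent norm -/
  equiv : X ≃L[ℝ] lp (fun _ : ℕ => ℝ) 2
  /-- the order of `X` is the coordinatewise order of `ℓ²` -/
  order_iff : ∀ x : X, 0 ≤ x ↔ ∀ n : ℕ, 0 ≤ equiv x n
  not_weaklyMonotone : ¬ WeaklyMonotoneLattice X
  not_BPBpp : ¬ BPBppPositive X

/-!
Renorm `ℓ²` by `N x = max ‖x‖₂ (2 ‖x‖_∞) + ∑ 2⁻ⁿ |xₙ|`. The weighted `ℓ¹` term makes `N` strictly
monotone in `|x|`, so a vector `y` with `N y⁺ = N y` is positive. For `w = e_k - e_{k+1}` the sup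
term does not see the negative coordinate, hence `N w⁺ / N w ≥ (2 + 2⁻ᵏ) / (2 + 3/2 · 2⁻ᵏ) → 1`,
while every positive vector stays at distance `> 1/2` from `w / N w`. This violates weak
monotonicity; it also violates BPBpp with the positive functional `(2 + 2⁻ᵏ) e_k^*`, because a
positive `g` of norm one with `g y = 1 = ‖y‖` forces `N y⁺ = N y`.
-/

open scoped NNReal lp

noncomputable section

lemma norm_sup_zero_le_norm {E : Type*} [NormedAddCommGroup E] [Lattice E] [HasSolidNorm E]
    [IsOrderedAddMonoid E] (x : E) : ‖x ⊔ 0‖ ≤ ‖x‖ := by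
  simpa using norm_sup_sub_sup_le_norm x 0 0

lemma apply_le_norm_sup_zero {E : Type*} [NormedAddCommGroup E] [Lattice E]
    [IsOrderedAddMonoid E] [NormedSpace ℝ E] {g : E →L[ℝ] ℝ} (hg : ∀ z, 0 ≤ z → 0 ≤ g z)
    (hg1 : ‖g‖ ≤ 1) (y : E) : g y ≤ ‖y ⊔ 0‖ :=
  calc g y ≤ g (y ⊔ 0) := by simpa using hg (y ⊔ 0 - y) (sub_nonneg.2 le_sup_left)
    _ ≤ ‖g‖ * ‖y ⊔ 0‖ := (Real.le_norm_self _).trans (g.le_opNorm _)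
    _ ≤ ‖y ⊔ 0‖ := mul_le_of_le_one_left (norm_nonneg _) hg1

section Memℓp

variable {α : Type*} {p : ℝ≥0∞} {f g : α → ℝ}

lemma Memℓp.sup (hf : Memℓp f p) (hg : Memℓp g p) : Memℓp (f ⊔ g) p :=
  (hf.norm.add hg.norm).mono fun _ =>
    abs_max_le_max_abs_abs.trans (max_le_add_of_nonneg (abs_nonneg _) (abs_nonneg _))

lemma Memℓp.inf (hf : Memℓp f p) (hg : Memℓp g p) : Memℓp (f ⊓ g) p :=
  (hf.norm.add hg.norm).mono fun _ =>
    abs_min_le_max_abs_abs.trans (max_le_add_of_nonneg (abs_nonneg _) (abs_nonneg _))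

end Memℓp

def RenormedEll2 : Type := ℓ²(ℕ, ℝ)

namespace RenormedEll2

lemma summable_inv_two_pow : Summable fun n : ℕ => (2⁻¹ : ℝ) ^ n :=
  summable_geometric_of_lt_one (by norm_num) (by norm_num)

lemma summable_weight_mul_abs (x : ℓ²(ℕ, ℝ)) : Summable fun n => (2⁻¹ : ℝ) ^ n * |x n| :=
  (summable_inv_two_pow.mul_right ‖x‖).of_nonneg_of_le (fun _ => by positivity) fun n =>
    mul_le_mul_of_nonneg_left (lp.norm_apply_le_norm two_ne_zero x n) (by positivity)

def weightedL1 : Seminorm ℝ ℓ²(ℕ, ℝ) :=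
  Seminorm.of (fun x => ∑' n, (2⁻¹ : ℝ) ^ n * |x n|)
    (fun x y => by
      rw [← (summable_weight_mul_abs x).tsum_add (summable_weight_mul_abs y)]
      refine (summable_weight_mul_abs _).tsum_le_tsum (fun n => ?_)
        ((summable_weight_mul_abs x).add (summable_weight_mul_abs y))
      rw [← mul_add, lp.coeFn_add]
      exact mul_le_mul_of_nonneg_left (abs_add_le _ _) (by positivity))
    (fun c x => by
      rw [← tsum_mul_left]
      exact tsum_congr fun n => by
        rw [lp.coeFn_smul, Pi.smul_apply, smul_eq_mul, abs_mul, Real.norm_eq_abs]; ring)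

lemma weightedL1_apply (x : ℓ²(ℕ, ℝ)) : weightedL1 x = ∑' n, (2⁻¹ : ℝ) ^ n * |x n| := rfl

lemma weightedL1_le (x : ℓ²(ℕ, ℝ)) : weightedL1 x ≤ 2 * ‖x‖ :=
  calc weightedL1 x ≤ ∑' n, (2⁻¹ : ℝ) ^ n * ‖x‖ :=
        (summable_weight_mul_abs x).tsum_le_tsum
          (fun n => mul_le_mul_of_nonneg_left (lp.norm_apply_le_norm two_ne_zero x n)
            (by positivity))
          (summable_inv_two_pow.mul_right _)
    _ = 2 * ‖x‖ := by rw [tsum_mul_right, tsum_geometric_inv_two]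

lemma weightedL1_mono {x y : ℓ²(ℕ, ℝ)} (h : ∀ n, |x n| ≤ |y n|) : weightedL1 x ≤ weightedL1 y :=
  (summable_weight_mul_abs x).tsum_le_tsum
    (fun n => mul_le_mul_of_nonneg_left (h n) (by positivity)) (summable_weight_mul_abs y)

lemma weightedL1_lt_weightedL1 {x y : ℓ²(ℕ, ℝ)} (h : ∀ n, |x n| ≤ |y n|) {m : ℕ}
    (hm : |x m| < |y m|) : weightedL1 x < weightedL1 y :=
  (summable_weight_mul_abs x).tsum_lt_tsum
    (fun n => mul_le_mul_of_nonneg_left (h n) (by positivity))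
    (mul_lt_mul_of_pos_left hm (by positivity)) (summable_weight_mul_abs y)

lemma weightedL1_single (k : ℕ) (a : ℝ) : weightedL1 (lp.single 2 k a) = 2⁻¹ ^ k * |a| := by
  rw [weightedL1_apply, tsum_eq_single k fun n hn => by simp [lp.single_apply, hn]]
  simp

def toEllInfty : ℓ²(ℕ, ℝ) →ₗ[ℝ] ℓ^∞(ℕ, ℝ) := lp.linearMapOfLE ℝ _ le_top

@[simp] lemma toEllInfty_apply (x : ℓ²(ℕ, ℝ)) (n : ℕ) : toEllInfty x n = x n := rfl

lemma norm_toEllInfty_le (x : ℓ²(ℕ, ℝ)) : ‖toEllInfty x‖ ≤ ‖x‖ :=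
  lp.norm_le_of_forall_le (norm_nonneg _) fun n => lp.norm_apply_le_norm two_ne_zero x n

def renorm : Seminorm ℝ ℓ²(ℕ, ℝ) :=
  normSeminorm ℝ ℓ²(ℕ, ℝ) ⊔ (2 : ℝ≥0) • (normSeminorm ℝ ℓ^∞(ℕ, ℝ)).comp toEllInfty + weightedL1

lemma renorm_apply (x : ℓ²(ℕ, ℝ)) :
    renorm x = max ‖x‖ (2 * ‖toEllInfty x‖) + weightedL1 x := by
  simp [renorm, NNReal.smul_def]

lemma norm_le_renorm (x : ℓ²(ℕ, ℝ)) : ‖x‖ ≤ renorm x := by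
  rw [renorm_apply]
  exact le_add_of_le_of_nonneg (le_max_left _ _) (apply_nonneg _ _)

lemma renorm_le (x : ℓ²(ℕ, ℝ)) : renorm x ≤ 4 * ‖x‖ := by
  have hmax : max ‖x‖ (2 * ‖toEllInfty x‖) ≤ 2 * ‖x‖ :=
    max_le (by linarith [norm_nonneg x]) (by linarith [norm_toEllInfty_le x])
  linarith [renorm_apply x, weightedL1_le x]

lemma max_norm_toEllInfty_mono {x y : ℓ²(ℕ, ℝ)} (h : ∀ n, |x n| ≤ |y n|) :
    max ‖x‖ (2 * ‖toEllInfty x‖) ≤ max ‖y‖ (2 * ‖toEllInfty y‖) :=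
  max_le_max (lp.norm_mono two_ne_zero h) (by gcongr; exact lp.norm_mono ENNReal.top_ne_zero h)

lemma renorm_mono {x y : ℓ²(ℕ, ℝ)} (h : ∀ n, |x n| ≤ |y n|) : renorm x ≤ renorm y := by
  rw [renorm_apply, renorm_apply]
  exact add_le_add (max_norm_toEllInfty_mono h) (weightedL1_mono h)

lemma renorm_lt_renorm {x y : ℓ²(ℕ, ℝ)} (h : ∀ n, |x n| ≤ |y n|) {m : ℕ} (hm : |x m| < |y m|) :
    renorm x < renorm y := by
  rw [renorm_apply, renorm_apply]
  exact add_lt_add_of_le_of_lt (max_norm_toEllInfty_mono h) (weightedL1_lt_weightedL1 h hm)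

lemma renorm_single (k : ℕ) (a : ℝ) : renorm (lp.single 2 k a) = (2 + 2⁻¹ ^ k) * |a| := by
  have hinf : toEllInfty (lp.single 2 k a) = lp.single ∞ k a := by ext n; simp [lp.single_apply]
  rw [renorm_apply, hinf, weightedL1_single, lp.norm_single (by norm_num),
    lp.norm_single (by simp), Real.norm_eq_abs, max_eq_right (by linarith [abs_nonneg a])]
  ring

def dipole (k : ℕ) : ℓ²(ℕ, ℝ) := lp.single 2 k (1 : ℝ) - lp.single 2 (k + 1) 1

lemma dipole_apply (k n : ℕ) :
    dipole k n = (if n = k then 1 else 0) - (if n = k + 1 then 1 else 0) := by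
  simp [dipole, lp.single_apply, Pi.single_apply]

lemma renorm_dipole_le (k : ℕ) : renorm (dipole k) ≤ 2 + 3 / 2 * 2⁻¹ ^ k := by
  have h2 : ‖dipole k‖ ≤ 2 := by
    have := norm_sub_le (lp.single 2 k 1 : ℓ²(ℕ, ℝ)) (lp.single 2 (k + 1) 1)
    rw [lp.norm_single (by norm_num), lp.norm_single (by norm_num)] at this
    norm_num at this
    exact this
  have hinf : ‖toEllInfty (dipole k)‖ ≤ 1 :=
    lp.norm_le_of_forall_le zero_le_one fun n => by
      rw [toEllInfty_apply, dipole_apply]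
      split_ifs <;> simp_all
  have hw : weightedL1 (dipole k) ≤ 3 / 2 * 2⁻¹ ^ k := by
    have := map_sub_le_add weightedL1 (lp.single 2 k 1 : ℓ²(ℕ, ℝ)) (lp.single 2 (k + 1) 1)
    rw [weightedL1_single, weightedL1_single, pow_succ, abs_one] at this
    rw [dipole]
    linarith
  rw [renorm_apply]
  linarith [max_le h2 (by linarith : 2 * ‖toEllInfty (dipole k)‖ ≤ 2)]

lemma le_renorm_dipole (k : ℕ) : 2 + 2⁻¹ ^ k ≤ renorm (dipole k) := by
  calc 2 + 2⁻¹ ^ k = renorm (lp.single 2 k (1 : ℝ)) := by simp [renorm_single]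
    _ ≤ renorm (dipole k) := renorm_mono fun n => by
      rw [dipole_apply, lp.single_apply]
      split_ifs <;> simp_all

lemma renorm_dipole_pos (k : ℕ) : 0 < renorm (dipole k) :=
  lt_of_lt_of_le (by positivity) (le_renorm_dipole k)

instance : AddCommGroup RenormedEll2 := inferInstanceAs (AddCommGroup ℓ²(ℕ, ℝ))
instance : Module ℝ RenormedEll2 := inferInstanceAs (Module ℝ ℓ²(ℕ, ℝ))

def toL2 : RenormedEll2 ≃ₗ[ℝ] ℓ²(ℕ, ℝ) := LinearEquiv.refl ℝ _

instance : FunLike RenormedEll2 ℕ ℝ where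
  coe x := toL2 x
  coe_injective _ _ h := toL2.injective (lp.ext h)

@[simp] lemma coe_toL2_symm (x : ℓ²(ℕ, ℝ)) : ⇑(toL2.symm x) = ⇑x := rfl
@[simp] lemma coe_zero : ⇑(0 : RenormedEll2) = 0 := rfl
@[simp] lemma coe_add (x y : RenormedEll2) : ⇑(x + y) = ⇑x + ⇑y := lp.coeFn_add (toL2 x) (toL2 y)
@[simp] lemma coe_neg (x : RenormedEll2) : ⇑(-x) = -⇑x := lp.coeFn_neg (toL2 x)
@[simp] lemma coe_sub (x y : RenormedEll2) : ⇑(x - y) = ⇑x - ⇑y := lp.coeFn_sub (toL2 x) (toL2 y)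
@[simp] lemma coe_smul (c : ℝ) (x : RenormedEll2) : ⇑(c • x) = c • ⇑x := lp.coeFn_smul c (toL2 x)

instance : LE RenormedEll2 := ⟨fun x y => ⇑x ≤ ⇑y⟩
instance : LT RenormedEll2 := ⟨fun x y => ⇑x < ⇑y⟩
instance : Max RenormedEll2 :=
  ⟨fun x y => toL2.symm ⟨(⇑x ⊔ ⇑y : ℕ → ℝ), (lp.memℓp (toL2 x)).sup (lp.memℓp (toL2 y))⟩⟩
instance : Min RenormedEll2 :=
  ⟨fun x y => toL2.symm ⟨(⇑x ⊓ ⇑y : ℕ → ℝ), (lp.memℓp (toL2 x)).inf (lp.memℓp (toL2 y))⟩⟩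

instance : Lattice RenormedEll2 :=
  DFunLike.coe_injective.lattice _ Iff.rfl Iff.rfl (fun _ _ => rfl) (fun _ _ => rfl)

instance : IsOrderedAddMonoid RenormedEll2 :=
  Function.Injective.isOrderedAddMonoid DFunLike.coe coe_add Iff.rfl

instance : PosSMulStrictMono ℝ RenormedEll2 :=
  PosSMulStrictMono.lift DFunLike.coe Iff.rfl coe_smul

lemma le_def {x y : RenormedEll2} : x ≤ y ↔ ∀ n, x n ≤ y n := Iff.rfl

@[simp] lemma sup_apply (x y : RenormedEll2) (n : ℕ) : (x ⊔ y) n = max (x n) (y n) := rfl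

@[simp] lemma abs_apply (x : RenormedEll2) (n : ℕ) : |x| n = |x n| := by
  simp [abs]

instance : NormedAddCommGroup RenormedEll2 :=
  AddGroupNorm.toNormedAddCommGroup
    { (renorm.comp toL2.toLinearMap).toAddGroupSeminorm with
      eq_zero_of_map_eq_zero' := fun _ hx =>
        toL2.map_eq_zero_iff.1 (norm_le_zero_iff.1 ((norm_le_renorm _).trans_eq hx)) }

lemma norm_def (x : RenormedEll2) : ‖x‖ = renorm (toL2 x) := rfl

instance : NormedSpace ℝ RenormedEll2 where
  norm_smul_le c x := by rw [norm_def, norm_def, map_smul, map_smul_eq_mul]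

lemma norm_le_norm_of_abs_apply_le {x y : RenormedEll2} (h : ∀ n, |x n| ≤ |y n|) : ‖x‖ ≤ ‖y‖ :=
  renorm_mono h

lemma norm_lt_norm_of_abs_apply_lt {x y : RenormedEll2} (h : ∀ n, |x n| ≤ |y n|) {m : ℕ}
    (hm : |x m| < |y m|) : ‖x‖ < ‖y‖ :=
  renorm_lt_renorm h hm

instance : HasSolidNorm RenormedEll2 where
  solid _ _ h := norm_le_norm_of_abs_apply_le fun n => by simpa using h n

lemma norm_toL2_symm_single (k : ℕ) (a : ℝ) :
    ‖toL2.symm (lp.single 2 k a)‖ = (2 + 2⁻¹ ^ k) * |a| := by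
  rw [norm_def, LinearEquiv.apply_symm_apply, renorm_single]

def toL2CLE : RenormedEll2 ≃L[ℝ] ℓ²(ℕ, ℝ) :=
  toL2.toContinuousLinearEquivOfBounds 1 4
    (fun x => by rw [one_mul, norm_def]; exact norm_le_renorm _) renorm_le

lemma nonneg_of_norm_sup_zero_eq {y : RenormedEll2} (h : ‖y ⊔ 0‖ = ‖y‖) : 0 ≤ y := by
  by_contra hy
  obtain ⟨m, hm⟩ : ∃ m, y m < 0 := by simpa [le_def] using hy
  refine h.not_lt (norm_lt_norm_of_abs_apply_lt (m := m) (fun n => ?_) ?_)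
  · rcases le_total (y n) 0 with hn | hn <;> simp [hn]
  · rw [sup_apply, coe_zero, Pi.zero_apply, max_eq_right hm.le, abs_zero]
    exact abs_pos.2 hm.ne

def normalizedDipole (k : ℕ) : RenormedEll2 := (renorm (dipole k))⁻¹ • toL2.symm (dipole k)

lemma normalizedDipole_apply (k n : ℕ) :
    normalizedDipole k n = (renorm (dipole k))⁻¹ * dipole k n := by
  simp [normalizedDipole]

lemma norm_normalizedDipole (k : ℕ) : ‖normalizedDipole k‖ = 1 := by
  rw [normalizedDipole, norm_smul, norm_def, LinearEquiv.apply_symm_apply, norm_inv,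
    Real.norm_of_nonneg (renorm_dipole_pos k).le, inv_mul_cancel₀ (renorm_dipole_pos k).ne']

lemma half_lt_norm_sub_normalizedDipole (k : ℕ) {y : RenormedEll2} (hy : 0 ≤ y) :
    1 / 2 < ‖y - normalizedDipole k‖ := by
  set c := (renorm (dipole k))⁻¹ with hc_def
  have hc : 2 / 7 ≤ c := by
    rw [hc_def, le_inv_comm₀ (by norm_num) (renorm_dipole_pos k)]
    linarith [renorm_dipole_le k, pow_le_one₀ (n := k) (by norm_num : (0 : ℝ) ≤ 2⁻¹) (by norm_num)]
  calc 1 / 2 < (2 + 2⁻¹ ^ (k + 1)) * |c| := by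
        rw [abs_of_nonneg (by linarith)]
        nlinarith [pow_pos (by norm_num : (0 : ℝ) < 2⁻¹) (k + 1)]
    _ = ‖toL2.symm (lp.single 2 (k + 1) c)‖ := (norm_toL2_symm_single _ _).symm
    _ ≤ ‖y - normalizedDipole k‖ := norm_le_norm_of_abs_apply_le fun n => by
        rcases eq_or_ne n (k + 1) with rfl | hn
        · have hyk : 0 ≤ y (k + 1) := hy (k + 1)
          rw [coe_toL2_symm, lp.single_apply_self, coe_sub, Pi.sub_apply, normalizedDipole_apply,
            dipole_apply, if_neg (by omega), if_pos rfl, abs_of_nonneg (by linarith),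
            abs_of_nonneg (by linarith)]
          linarith
        · simp [lp.single_apply, hn]

def coordFunctional (k : ℕ) : RenormedEll2 →L[ℝ] ℝ :=
  (2 + 2⁻¹ ^ k : ℝ) •
    (lp.evalCLM ℝ (fun _ : ℕ => ℝ) 2 k).comp (toL2CLE : RenormedEll2 →L[ℝ] ℓ²(ℕ, ℝ))

lemma coordFunctional_apply (k : ℕ) (z : RenormedEll2) :
    coordFunctional k z = (2 + 2⁻¹ ^ k) * z k := rfl

lemma coordFunctional_nonneg (k : ℕ) (z : RenormedEll2) (hz : 0 ≤ z) : 0 ≤ coordFunctional k z :=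
  mul_nonneg (by positivity) (hz k)

lemma norm_coordFunctional (k : ℕ) : ‖coordFunctional k‖ = 1 := by
  refine le_antisymm ((coordFunctional k).opNorm_le_bound zero_le_one fun z => ?_) ?_
  · rw [one_mul, coordFunctional_apply, Real.norm_eq_abs, abs_mul, abs_of_pos (by positivity),
      ← norm_toL2_symm_single]
    exact norm_le_norm_of_abs_apply_le fun n => by
      rcases eq_or_ne n k with rfl | hn <;> simp [lp.single_apply, *]
  · have hunit : ‖toL2.symm (lp.single 2 k (2 + 2⁻¹ ^ k)⁻¹)‖ = 1 := by
      rw [norm_toL2_symm_single, abs_inv, abs_of_pos (by positivity),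
        mul_inv_cancel₀ (by positivity)]
    have := (coordFunctional k).unit_le_opNorm _ hunit.le
    rwa [coordFunctional_apply, coe_toL2_symm, lp.single_apply_self,
      mul_inv_cancel₀ (by positivity), norm_one] at this

lemma one_sub_lt_coordFunctional_normalizedDipole (k : ℕ) :
    1 - 2⁻¹ ^ k < coordFunctional k (normalizedDipole k) := by
  have ht : 0 < (2⁻¹ : ℝ) ^ k := by positivity
  have ht1 : (2⁻¹ : ℝ) ^ k ≤ 1 := pow_le_one₀ (by norm_num) (by norm_num)
  have hR := renorm_dipole_le k
  rw [coordFunctional_apply, normalizedDipole_apply, dipole_apply, if_pos rfl, if_neg (by omega),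
    sub_zero, mul_one, ← div_eq_mul_inv, lt_div_iff₀ (renorm_dipole_pos k)]
  nlinarith

theorem not_weaklyMonotoneLattice : ¬ WeaklyMonotoneLattice RenormedEll2 := by
  intro h
  obtain ⟨δ, hδ, -, hwm⟩ := h (1 / 2) (by norm_num) (by norm_num)
  obtain ⟨k, hk⟩ := exists_pow_lt_of_lt_one hδ (by norm_num : (2⁻¹ : ℝ) < 1)
  have hpos : 1 - δ < ‖normalizedDipole k ⊔ 0‖ := by
    linarith [one_sub_lt_coordFunctional_normalizedDipole k,
      apply_le_norm_sup_zero (coordFunctional_nonneg k) (norm_coordFunctional k).le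
        (normalizedDipole k)]
  obtain ⟨y, hy1, hy2, hyx⟩ := hwm (normalizedDipole k) (norm_normalizedDipole k).le hpos
  linarith [half_lt_norm_sub_normalizedDipole k (nonneg_of_norm_sup_zero_eq (hy2.trans hy1.symm))]

theorem not_BPBppPositive : ¬ BPBppPositive RenormedEll2 := by
  intro h
  obtain ⟨η, hη, -, hbpb⟩ := h (1 / 2) (by norm_num) (by norm_num)
  obtain ⟨k, hk⟩ := exists_pow_lt_of_lt_one hη (by norm_num : (2⁻¹ : ℝ) < 1)
  obtain ⟨y, g, hy1, hg, hg1, hgy, hyx, -⟩ :=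
    hbpb (coordFunctional k) (coordFunctional_nonneg k) (norm_coordFunctional k)
      (normalizedDipole k) (norm_normalizedDipole k)
      (by linarith [one_sub_lt_coordFunctional_normalizedDipole k])
  have hsup : ‖y ⊔ 0‖ = ‖y‖ :=
    le_antisymm (norm_sup_zero_le_norm y) (hy1 ▸ hgy ▸ apply_le_norm_sup_zero hg hg1.le y)
  linarith [half_lt_norm_sub_normalizedDipole k (nonneg_of_norm_sup_zero_eq hsup)]

end RenormedEll2

end

/-- There is a lattice norm on `ℓ²`, equivalent to the standard norm and
compatible with the coordinatewise order, such that the resulting Banach lattice is not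
weakly monotone; consequently there is a Banach lattice isomorphic to `ℓ²` without the
Bishop–Phelps–Bollobás property for positive functionals. -/
theorem stmt19 : Nonempty Ell2Counterexample :=
  ⟨{ X := RenormedEll2
     equiv := RenormedEll2.toL2CLE
     order_iff := fun _ => Iff.rfl
     not_weaklyMonotone := RenormedEll2.not_weaklyMonotoneLattice
     not_BPBpp := RenormedEll2.not_BPBppPositive }⟩
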